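/- arXiv:2012.11535 — 2 statements merged into one kernel-verified Lean document; each statement's English description precedes it below -/
import Mathlib

section
/- For every nonzero rational number x, the sum of all valuations ∑_{p ≤ ∞} v_p(x) equals 0, where v_p(x) = −ord_p(x)·log p for each prime p and v_∞(x) = log|x|. -/
/-! Unique factorisation gives `log n = ∑ₚ ord_p(n) log p` for every natural `n`; writing
`x = num / den` and subtracting the two identities gives `log |x| = ∑ₚ ord_p(x) log p`. -/

theorem Nat.hasSum_factorization_mul_log (n : ℕ) :
    HasSum (fun p : Nat.Primes => (n.factorization p : ℝ) * Real.log p) (Real.log n) := by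
  rw [Real.log_nat_eq_sum_factorization]
  refine (Nat.Primes.coe_nat_injective.hasSum_iff
    (f := fun p : ℕ => (n.factorization p : ℝ) * Real.log p) fun p hp => ?_).2 ?_
  · simp [Nat.factorization_eq_zero_of_not_prime n fun h => hp ⟨⟨p, h⟩, rfl⟩]
  · exact hasSum_sum_of_ne_finset_zero fun p hp => by simp [Finsupp.notMem_support_iff.1 hp]

theorem Nat.hasSum_padicValNat_mul_log (n : ℕ) :
    HasSum (fun p : Nat.Primes => (padicValNat p n : ℝ) * Real.log p) (Real.log n) := by
  convert n.hasSum_factorization_mul_log using 3 with p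
  rw [Nat.factorization_def n p.2]

theorem Rat.hasSum_padicValRat_mul_log (x : ℚ) :
    HasSum (fun p : Nat.Primes => (padicValRat p x : ℝ) * Real.log p) (Real.log |(x : ℝ)|) := by
  rcases eq_or_ne x 0 with rfl | hx
  · simp -- junk values: `padicValRat p 0 = 0` and `Real.log 0 = 0`
  have hlog : Real.log |(x : ℝ)| = Real.log x.num.natAbs - Real.log x.den := by
    rw [← Real.log_div (by exact_mod_cast Int.natAbs_ne_zero.2 (Rat.num_ne_zero.2 hx))
      (by positivity), Rat.cast_def, abs_div, Nat.cast_natAbs, Int.cast_abs, Nat.abs_cast]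
  rw [hlog]
  refine ((Nat.hasSum_padicValNat_mul_log _).sub (Nat.hasSum_padicValNat_mul_log x.den)).congr_fun
    fun p => ?_
  rw [padicValRat_def, padicValInt, Int.cast_sub, Int.cast_natCast, Int.cast_natCast, sub_mul]

theorem stmt_15_general (x : ℚ) :
    HasSum (fun p : Nat.Primes => (-(padicValRat p x) : ℝ) * Real.log p)
      (-(Real.log |(x : ℝ)|)) := by
  simpa only [neg_mul] using (Rat.hasSum_padicValRat_mul_log x).neg

theorem stmt_15 (x : ℚ) (hx : x ≠ 0) :
    HasSum (fun p : Nat.Primes => (-(padicValRat p x) : ℝ) * Real.log p)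
      (-(Real.log |(x : ℝ)|)) :=
  stmt_15_general x
end

section
/- For every nonzero rational number x, the product |x|_∞ · ∏_{p prime} |x|_p equals 1, where |x|_p = p^{−ord_p(x)} is the p-adic absolute value. -/
open scoped BigOperators

private lemma aux_norm_one (x : ℚ) (hx : x ≠ 0) (p : Nat.Primes)
    (h : (p : ℕ) ∉ (x.num * x.den).natAbs.primeFactors) : padicNorm (p : ℕ) x = 1 := by
  have hN : (x.num * x.den).natAbs ≠ 0 := by
    rw [Int.natAbs_ne_zero]
    exact mul_ne_zero (Rat.num_ne_zero.mpr hx) (by exact_mod_cast x.den_nz)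
  have hpd : ¬ (p : ℕ) ∣ (x.num * x.den).natAbs := by
    intro hd
    exact h (Nat.mem_primeFactors.mpr ⟨p.2, hd, hN⟩)
  have hnum : ¬ ((p : ℕ) : ℤ) ∣ x.num := by
    intro hd
    exact hpd (Int.natAbs_dvd_natAbs.mpr (hd.mul_right _))
  have hden : ¬ (p : ℕ) ∣ x.den := by
    intro hd
    refine hpd ?_
    have : ((p:ℕ):ℤ) ∣ x.num * x.den := Dvd.dvd.mul_left (Int.natCast_dvd_natCast.mpr hd) _
    exact Int.natAbs_dvd_natAbs.mpr this
  have hv : padicValRat p x = 0 := by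
    rw [padicValRat_def, padicValInt.eq_zero_of_not_dvd hnum,
      padicValNat.eq_zero_of_not_dvd hden]
    simp
  rw [padicNorm, if_neg hx, hv]
  simp

private lemma aux_multipliable (x : ℚ) (hx : x ≠ 0) :
    Multipliable (fun p : Nat.Primes => ((padicNorm p x : ℝ))) := by
  apply multipliable_of_finite_mulSupport
  have : Function.mulSupport (fun p : Nat.Primes => ((padicNorm p x : ℝ))) ⊆
      ((↑) : Nat.Primes → ℕ) ⁻¹' ((x.num * x.den).natAbs.primeFactors : Set ℕ) := by
    intro p hp
    simp only [Function.mem_mulSupport] at hp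
    by_contra h
    exact hp (by rw [aux_norm_one x hx p h]; norm_num)
  exact Set.Finite.subset (Set.Finite.preimage
    (Set.injOn_of_injective (fun a b h => Subtype.ext h))
    ((x.num * x.den).natAbs.primeFactors.finite_toSet)) this

noncomputable def auxF (x : ℚ) : ℝ := |(x : ℝ)| * ∏' p : Nat.Primes, ((padicNorm p x : ℝ))

private lemma auxF_mul (x y : ℚ) (hx : x ≠ 0) (hy : y ≠ 0) :
    auxF (x * y) = auxF x * auxF y := by
  unfold auxF
  have h1 : (fun p : Nat.Primes => ((padicNorm p (x * y) : ℝ))) =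
      fun p : Nat.Primes => ((padicNorm p x : ℝ)) * ((padicNorm p y : ℝ)) := by
    funext p
    haveI : Fact (p : ℕ).Prime := ⟨p.2⟩
    rw [padicNorm.mul]; push_cast; ring
  rw [h1, Multipliable.tprod_mul (aux_multipliable x hx) (aux_multipliable y hy)]
  push_cast
  rw [abs_mul]
  ring

private lemma auxF_one : auxF 1 = 1 := by
  unfold auxF
  simp [padicNorm.one]

private lemma auxF_prime (q : ℕ) (hq : q.Prime) : auxF (q : ℚ) = 1 := by
  unfold auxF
  haveI : Fact q.Prime := ⟨hq⟩
  have h : ∏' p : Nat.Primes, ((padicNorm p (q : ℚ) : ℝ)) = ((q : ℝ))⁻¹ := by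
    have h2 := tprod_eq_mulSingle
      (L := SummationFilter.unconditional _)
      (f := fun p : Nat.Primes => ((padicNorm (p : ℕ) (q : ℚ) : ℝ)))
      (⟨q, hq⟩ : Nat.Primes) (by
        intro p hp
        haveI : Fact (p : ℕ).Prime := ⟨p.2⟩
        have hne : (p : ℕ) ≠ q := fun h => hp (Subtype.ext h)
        simp only [padicNorm.padicNorm_of_prime_of_ne hne]
        norm_num)
    rw [h2]
    simp [padicNorm.padicNorm_p_of_prime]
  rw [h]
  have hq0 : (0 : ℝ) < q := by exact_mod_cast hq.pos
  rw [abs_of_pos (by push_cast; exact hq0)]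
  push_cast
  field_simp

private lemma auxF_nat (n : ℕ) : n ≠ 0 → auxF (n : ℚ) = 1 := by
  induction n using Nat.recOnMul with
  | zero => intro h; exact absurd rfl h
  | one => intro _; exact_mod_cast auxF_one
  | prime p hp => intro _; exact auxF_prime p hp
  | mul a b ha hb =>
    intro hab
    have ha' : a ≠ 0 := fun h => hab (by simp [h])
    have hb' : b ≠ 0 := fun h => hab (by simp [h])
    have : ((a * b : ℕ) : ℚ) = (a : ℚ) * (b : ℚ) := by push_cast; ring
    rw [this, auxF_mul _ _ (by exact_mod_cast ha') (by exact_mod_cast hb'),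
      ha ha', hb hb', mul_one]

private lemma auxF_neg (x : ℚ) : auxF (-x) = auxF x := by
  unfold auxF
  have : (fun p : Nat.Primes => ((padicNorm p (-x) : ℝ))) =
      fun p : Nat.Primes => ((padicNorm p x : ℝ)) := by
    funext p; rw [padicNorm.neg]
  rw [this]
  push_cast
  rw [abs_neg]

private lemma auxF_int (n : ℤ) (hn : n ≠ 0) : auxF (n : ℚ) = 1 := by
  rcases Int.natAbs_eq n with h | h
  · rw [h, Int.cast_natCast]
    exact auxF_nat n.natAbs (Int.natAbs_ne_zero.mpr hn)
  · rw [h, Int.cast_neg, Int.cast_natCast, auxF_neg]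
    exact auxF_nat n.natAbs (Int.natAbs_ne_zero.mpr hn)

private lemma auxF_eq_one (x : ℚ) (hx : x ≠ 0) : auxF x = 1 := by
  have hnum : (x.num : ℚ) ≠ 0 := by exact_mod_cast Rat.num_ne_zero.mpr hx
  have hden : ((x.den : ℕ) : ℚ) ≠ 0 := by
    exact_mod_cast (Nat.cast_ne_zero (R := ℚ)).mpr x.den_nz
  have hx' : x * (x.den : ℚ) = (x.num : ℚ) := by
    rw [mul_comm]
    exact_mod_cast Rat.den_mul_eq_num x
  have h1 : auxF (x * (x.den : ℚ)) = auxF x * auxF (x.den : ℚ) :=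
    auxF_mul x _ hx hden
  rw [hx', auxF_int x.num (Rat.num_ne_zero.mpr hx), auxF_nat x.den x.den_nz, mul_one] at h1
  exact h1.symm

theorem stmt_16 (x : ℚ) (hx : x ≠ 0) :
    Multipliable (fun p : Nat.Primes => ((padicNorm p x : ℝ))) ∧
      |(x : ℝ)| * ∏' p : Nat.Primes, ((padicNorm p x : ℝ)) = 1 := by
  exact ⟨aux_multipliable x hx, auxF_eq_one x hx⟩
end
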